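/- Let λ₁, λ₂ : ℝ → ℂ be differentiable and let x : ℝ → ℂ be twice differentiable with (d/dt - λ₂)(d/dt - λ₁) x = 0, i.e. ẍ - (λ₁ + λ₂)ẋ + (λ₁λ₂ - λ̇₁)x = 0. If Re(λ₁(t)) ≤ -c and Re(λ₂(t)) ≤ -c for a constant c > 0 and all t ≥ 0, then x(t) → 0 as t → ∞. -/

import Mathlib

/-!
The factorisation reduces the problem to two first-order equations: `y := ẋ - λ₁ x` solves
`ẏ = λ₂ y`, and then `ẋ = λ₁ x + y`. For `ż = λ z + f` with `Re λ ≤ -c` and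
`‖f s‖ ≤ B e^{-cs}`, the mean value inequality applied to `s ↦ e^{Λ(t) - Λ(s)} z(s)`
(`Λ` a primitive of `λ`) gives `‖z t‖ ≤ (‖z 0‖ + B t) e^{-ct}`. Used first with `f = 0` and
then with `f = y`, this yields `‖x t‖ ≤ (‖x 0‖ + ‖y 0‖ t) e^{-ct} → 0`.
-/

open Filter Set

theorem re_sub_le_of_hasDerivAt {L l : ℝ → ℂ} {c : ℝ} (hL : ∀ t, HasDerivAt L (l t) t)
    (hre : ∀ t ≥ (0 : ℝ), (l t).re ≤ -c) {s t : ℝ} (hs : 0 ≤ s) (hst : s ≤ t) :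
    (L t - L s).re ≤ -c * (t - s) := by
  have hLre : ∀ u, HasDerivAt (fun u => (L u).re) (l u).re u := fun u =>
    (Complex.reCLM.hasFDerivAt.comp_hasDerivAt u (hL u))
  rw [Complex.sub_re]
  refine (convex_Ici 0).image_sub_le_mul_sub_of_deriv_le
    (fun u _ => (hLre u).continuousAt.continuousWithinAt)
    (fun u _ => (hLre u).differentiableAt.differentiableWithinAt)
    (fun u hu => ?_) s hs t (hs.trans hst) hst
  rw [interior_Ici] at hu
  exact (hLre u).deriv ▸ hre u (hu.le)

theorem norm_le_of_hasDerivAt_mul_add {z f l : ℝ → ℂ} {c B : ℝ} (hl : Continuous l)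
    (hre : ∀ t ≥ (0 : ℝ), (l t).re ≤ -c)
    (hz : ∀ t, HasDerivAt z (l t * z t + f t) t)
    (hf : ∀ t ≥ (0 : ℝ), ‖f t‖ ≤ B * Real.exp (-c * t)) {t : ℝ} (ht : 0 ≤ t) :
    ‖z t‖ ≤ (‖z 0‖ + B * t) * Real.exp (-c * t) := by
  set L : ℝ → ℂ := fun u => ∫ v in (0 : ℝ)..u, l v
  have hL : ∀ u, HasDerivAt L (l u) u := fun u => (hl.integral_hasStrictDerivAt 0 u).hasDerivAt
  have hdecay : ∀ s ∈ Icc 0 t, ‖Complex.exp (L t - L s)‖ ≤ Real.exp (-c * (t - s)) := by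
    intro s hs
    rw [Complex.norm_exp]
    exact Real.exp_le_exp.2 (re_sub_le_of_hasDerivAt hL hre hs.1 hs.2)
  set u : ℝ → ℂ := fun s => Complex.exp (L t - L s) * z s
  have hu : ∀ s, HasDerivAt u (Complex.exp (L t - L s) * f s) s := fun s =>
    (((hL s).const_sub (L t)).cexp.mul (hz s)).congr_deriv (by ring)
  have hu' : ∀ s ∈ Ico 0 t, ‖Complex.exp (L t - L s) * f s‖ ≤ B * Real.exp (-c * t) := by
    intro s hs
    calc ‖Complex.exp (L t - L s) * f s‖
        ≤ Real.exp (-c * (t - s)) * (B * Real.exp (-c * s)) := by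
          rw [norm_mul]
          exact mul_le_mul (hdecay s (Ico_subset_Icc_self hs)) (hf s hs.1) (norm_nonneg _)
            (Real.exp_pos _).le
      _ = B * Real.exp (-c * t) := by
          rw [mul_left_comm, ← Real.exp_add]; ring_nf
  have hmvt := norm_image_sub_le_of_norm_deriv_le_segment'
    (fun s _ => (hu s).hasDerivWithinAt) hu' t (right_mem_Icc.2 ht)
  have hut : u t = z t := by simp [u]
  have hu0 : ‖u 0‖ ≤ ‖z 0‖ * Real.exp (-c * t) := by
    simpa [u, norm_mul, mul_comm] using
      mul_le_mul_of_nonneg_left (hdecay 0 (left_mem_Icc.2 ht)) (norm_nonneg (z 0))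
  calc ‖z t‖ ≤ ‖u 0‖ + ‖u t - u 0‖ := by rw [← hut]; exact norm_le_insert' _ _
    _ ≤ _ := by linarith

theorem tendsto_affine_mul_exp_neg_mul_atTop (a b : ℝ) {c : ℝ} (hc : 0 < c) :
    Tendsto (fun t => (a + b * t) * Real.exp (-c * t)) atTop (nhds 0) := by
  have h0 := (tendsto_rpow_mul_exp_neg_mul_atTop_nhds_zero 0 c hc).const_mul a
  have h1 := (tendsto_rpow_mul_exp_neg_mul_atTop_nhds_zero 1 c hc).const_mul b
  simpa [add_mul, mul_assoc] using h0.add h1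

theorem complex_factored_second_order_convergence
    (x x' x'' l₁ l₁' l₂ : ℝ → ℂ) (c : ℝ) (hc : 0 < c)
    (hx : ∀ t, HasDerivAt x (x' t) t)
    (hx' : ∀ t, HasDerivAt x' (x'' t) t)
    (hl₁ : ∀ t, HasDerivAt l₁ (l₁' t) t)
    (hl₂ : Continuous l₂)
    (hode : ∀ t, x'' t - (l₁ t + l₂ t) * x' t + (l₁ t * l₂ t - l₁' t) * x t = 0)
    (hre₁ : ∀ t ≥ (0 : ℝ), (l₁ t).re ≤ -c)
    (hre₂ : ∀ t ≥ (0 : ℝ), (l₂ t).re ≤ -c) :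
    Tendsto x atTop (nhds 0) := by
  have hl₁_cont : Continuous l₁ := continuous_iff_continuousAt.2 fun t => (hl₁ t).continuousAt
  set y : ℝ → ℂ := fun t => x' t - l₁ t * x t
  have hy : ∀ t, HasDerivAt y (l₂ t * y t + 0) t := fun t =>
    ((hx' t).sub ((hl₁ t).mul (hx t))).congr_deriv (by linear_combination hode t)
  have hx_eq : ∀ t, HasDerivAt x (l₁ t * x t + y t) t := fun t =>
    (hx t).congr_deriv (by ring)
  have hy_bound : ∀ t ≥ (0 : ℝ), ‖y t‖ ≤ ‖y 0‖ * Real.exp (-c * t) := fun t ht => by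
    simpa using norm_le_of_hasDerivAt_mul_add hl₂ hre₂ hy (B := 0) (by simp) ht
  refine squeeze_zero_norm' ?_ (tendsto_affine_mul_exp_neg_mul_atTop ‖x 0‖ ‖y 0‖ hc)
  filter_upwards [eventually_ge_atTop 0] with t ht
  exact norm_le_of_hasDerivAt_mul_add hl₁_cont hre₁ hx_eq hy_bound ht
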